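/- Let G be a graph of girth g ≥ 5 and X ⊆ V(G) with |X| = g−2, and let K_1,…,K_p be the components of G[X]. Then ∑_{{i,j}} |N_G(K_i) ∩ N_G(K_j)| ≤ C(p,2) if p ≥ 3, and ≤ 2p − 2 if p ∈ {1,2}, where the sum is over all unordered pairs {i,j} ⊆ [p]. -/

import Mathlib

open scoped Classical

variable {V : Type*}

/-- The external neighborhood of a set of vertices. -/
def extNbhd (G : SimpleGraph V) (X : Set V) : Set V :=
  {v | v ∉ X ∧ ∃ x ∈ X, G.Adj v x}

/-- The vertex set (in `V`) of a connected component of the induced subgraph `G[X]`. -/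
def compVerts (G : SimpleGraph V) (X : Set V)
    (C : (G.induce X).ConnectedComponent) : Set V :=
  {y | ∃ x : X, (G.induce X).connectedComponentMk x = C ∧ (x : V) = y}

/-- `w` has a neighbor in the component `C` of `G[X]`. -/
def touches (G : SimpleGraph V) (X : Set V) (w : V)
    (C : (G.induce X).ConnectedComponent) : Prop :=
  ∃ x : X, (G.induce X).connectedComponentMk x = C ∧ G.Adj w (x : V)

/-!
Two distinct common neighbours `w₁, w₂` of components `C ≠ D` of `G[X]` close a cycle
`w₁ → C → w₂ → D → w₁` through geodesics of `C` and `D`, so `g ≤ |C| + |D| + 2`.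
If a third component exists then `|C| + |D| < |X| = g - 2`, so every pair of components has at
most one common neighbour. If `C` and `D` are the only components then `|C| + |D| = g - 2` and
all these cycles are tight: the attachment points in `C` of three common neighbours would be
pairwise at distance `|C| - 1`, which forces `|C| ≤ 1`, and likewise `|D| ≤ 1`, contradicting
`g ≥ 5`.
-/

namespace SimpleGraph

variable {G : SimpleGraph V}

lemma ConnectedComponent.mem_supp_of_mem_support {C : G.ConnectedComponent} {u v w : V}
    (p : G.Walk u v) (hu : u ∈ C.supp) (hw : w ∈ p.support) : w ∈ C.supp := by
  rw [ConnectedComponent.mem_supp_iff] at hu ⊢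
  exact (ConnectedComponent.sound (p.takeUntil w hw).reachable).symm.trans hu

lemma ConnectedComponent.exists_path_of_dist {C : G.ConnectedComponent} {u v : V}
    (hu : u ∈ C.supp) (hv : v ∈ C.supp) :
    ∃ p : G.Walk u v, p.IsPath ∧ p.length = G.dist u v ∧ ∀ w ∈ p.support, w ∈ C.supp := by
  obtain ⟨p, hp, hlen⟩ := (C.reachable_of_mem_supp hu hv).exists_path_of_dist
  exact ⟨p, hp, hlen, fun w hw => C.mem_supp_of_mem_support p hu hw⟩

lemma Walk.IsPath.ncard_support {u v : V} {p : G.Walk u v} (hp : p.IsPath) :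
    {w | w ∈ p.support}.ncard = p.length + 1 := by
  rw [← p.length_support, ← List.toFinset_card_of_nodup hp.support_nodup,
    ← Set.ncard_coe_finset]
  simp

lemma girth_le_length_add_length_add_four {a₁ a₂ b₁ b₂ w₁ w₂ : V}
    {P : G.Walk a₁ a₂} {Q : G.Walk b₁ b₂} (hP : P.IsPath) (hQ : Q.IsPath)
    (hPQ : P.support.Disjoint Q.support) (hw : w₁ ≠ w₂)
    (hw₁P : w₁ ∉ P.support) (hw₂P : w₂ ∉ P.support)
    (hw₁Q : w₁ ∉ Q.support) (hw₂Q : w₂ ∉ Q.support)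
    (ha₁ : G.Adj w₁ a₁) (ha₂ : G.Adj a₂ w₂) (hb₂ : G.Adj w₂ b₂) (hb₁ : G.Adj b₁ w₁) :
    G.girth ≤ P.length + Q.length + 4 := by
  have hPath₁ : (Walk.cons ha₁ (P.concat ha₂)).IsPath := by
    refine (hP.concat hw₂P ha₂).cons ?_
    simpa [Walk.support_concat, hw] using hw₁P
  have hPath₂ : (Walk.cons hb₂ (Q.reverse.concat hb₁)).IsPath := by
    refine ((Walk.isPath_reverse_iff Q).2 hQ |>.concat (by simpa using hw₁Q) hb₁).cons ?_
    simpa [Walk.support_concat, hw.symm] using hw₂Q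
  have hcyc := hPath₁.isCycle_append hPath₂ (by
    simp only [Walk.support_cons, List.tail_cons, Walk.support_concat, Walk.support_reverse]
    simp [List.disjoint_append_left, List.disjoint_append_right, hPQ, hw₁P, hw₂Q, hw]) (by simp)
  have := G.girth_le_length hcyc
  simp only [Walk.length_append, Walk.length_cons, Walk.length_concat, Walk.length_reverse] at this
  omega

variable [Finite V]

lemma ConnectedComponent.dist_lt_ncard_supp {C : G.ConnectedComponent} {u v : V}
    (hu : u ∈ C.supp) (hv : v ∈ C.supp) : G.dist u v < C.supp.ncard := by
  obtain ⟨p, hp, hlen, hsupp⟩ := C.exists_path_of_dist hu hv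
  have := Set.ncard_le_ncard (s := {w | w ∈ p.support}) hsupp
  rw [hp.ncard_support] at this
  omega

/-- A geodesic that exhausts its component passes through every vertex of it. -/
lemma ConnectedComponent.dist_add_dist_le {C : G.ConnectedComponent} {u v w : V}
    (hu : u ∈ C.supp) (hv : v ∈ C.supp) (hw : w ∈ C.supp)
    (hC : C.supp.ncard ≤ G.dist u v + 1) : G.dist u w + G.dist w v ≤ G.dist u v := by
  obtain ⟨p, hp, hlen, hsupp⟩ := C.exists_path_of_dist hu hv
  have hpC : {x | x ∈ p.support} = C.supp :=
    Set.eq_of_subset_of_ncard_le hsupp (by rw [hp.ncard_support, hlen]; exact hC)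
  have hwp : w ∈ p.support := (hpC ▸ hw : w ∈ {x | x ∈ p.support})
  have hsplit := congrArg Walk.length (p.take_spec hwp)
  rw [Walk.length_append] at hsplit
  have := G.dist_le (p.takeUntil w hwp)
  have := G.dist_le (p.dropUntil w hwp)
  omega

lemma ConnectedComponent.ncard_supp_le_one_of_dist_add_one_eq {C : G.ConnectedComponent}
    {u v w : V} (hu : u ∈ C.supp) (hv : v ∈ C.supp) (hw : w ∈ C.supp)
    (huv : G.dist u v + 1 = C.supp.ncard) (huw : G.dist u w + 1 = C.supp.ncard)
    (hwv : G.dist w v + 1 = C.supp.ncard) : C.supp.ncard ≤ 1 := by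
  have := C.dist_add_dist_le hu hv hw huv.ge
  omega

end SimpleGraph

section InducedComponents

open SimpleGraph

variable {G : SimpleGraph V} {X : Set V}

lemma compVerts_eq_image_supp (C : (G.induce X).ConnectedComponent) :
    compVerts G X C = Subtype.val '' C.supp := by
  ext v
  simp [compVerts, ConnectedComponent.mem_supp_iff]

lemma compVerts_injective : Function.Injective (compVerts G X) := fun C D h => by
  rw [compVerts_eq_image_supp, compVerts_eq_image_supp,
    Set.image_injective.2 Subtype.val_injective |>.eq_iff] at h
  exact ConnectedComponent.supp_injective h

lemma ncard_compVerts (C : (G.induce X).ConnectedComponent) :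
    (compVerts G X C).ncard = C.supp.ncard := by
  rw [compVerts_eq_image_supp, Set.ncard_image_of_injective _ Subtype.val_injective]

lemma sum_ncard_compVerts [Fintype V] :
    ∑ C : (G.induce X).ConnectedComponent, (compVerts G X C).ncard = X.ncard := by
  rw [← Nat.card_coe_set_eq, Nat.card_eq_fintype_card, ← Finset.card_univ,
    Finset.card_eq_sum_card_fiberwise (f := (G.induce X).connectedComponentMk)
      (t := Finset.univ) (fun _ _ => Finset.mem_univ _)]
  refine Finset.sum_congr rfl fun C _ => ?_
  rw [ncard_compVerts, ← Set.ncard_coe_finset]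
  congr 1
  ext x
  simp [ConnectedComponent.mem_supp_iff]

lemma ncard_compVerts_add_ncard_compVerts_lt [Fintype V]
    {C D E : (G.induce X).ConnectedComponent} (hCD : C ≠ D) (hEC : E ≠ C) (hED : E ≠ D) :
    (compVerts G X C).ncard + (compVerts G X D).ncard < X.ncard := by
  have hE : 0 < (compVerts G X E).ncard := by
    rw [ncard_compVerts]
    exact (Set.ncard_pos (Set.toFinite _)).2 E.nonempty_supp
  have hsub := Finset.sum_le_univ_sum_of_nonneg (s := {C, D, E})
    (f := fun C => (compVerts G X C).ncard) (fun _ => Nat.zero_le _)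
  rw [sum_ncard_compVerts, Finset.sum_insert (by simp [hCD, hEC.symm]),
    Finset.sum_pair hED.symm] at hsub
  omega

lemma ncard_compVerts_add_ncard_compVerts_eq [Fintype V]
    {C D : (G.induce X).ConnectedComponent} (hCD : C ≠ D) (hcover : ∀ E, E = C ∨ E = D) :
    (compVerts G X C).ncard + (compVerts G X D).ncard = X.ncard := by
  have huniv : (Finset.univ : Finset (G.induce X).ConnectedComponent) = {C, D} := by
    ext E
    simpa using hcover E
  rw [← sum_ncard_compVerts (G := G) (X := X), huniv, Finset.sum_pair hCD]

lemma notMem_and_exists_adj_of_mem_extNbhd {C : (G.induce X).ConnectedComponent} {w : V}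
    (hw : w ∈ extNbhd G (compVerts G X C)) : w ∉ X ∧ ∃ a ∈ C.supp, G.Adj w a := by
  obtain ⟨hwC, _, ⟨a, ha, rfl⟩, hadj⟩ := hw
  refine ⟨fun hwX => hwC ⟨⟨w, hwX⟩, ?_, rfl⟩, a, ha, hadj⟩
  exact C.mem_supp_of_adj_mem_supp ha (hadj.symm : (G.induce X).Adj a ⟨w, hwX⟩)

lemma girth_le_dist_add_dist_add_four {C D : (G.induce X).ConnectedComponent} (hCD : C ≠ D)
    {a₁ a₂ b₁ b₂ : X} (ha₁ : a₁ ∈ C.supp) (ha₂ : a₂ ∈ C.supp)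
    (hb₁ : b₁ ∈ D.supp) (hb₂ : b₂ ∈ D.supp) {w₁ w₂ : V} (hw : w₁ ≠ w₂) (hw₁ : w₁ ∉ X)
    (hw₂ : w₂ ∉ X) (h₁a : G.Adj w₁ a₁) (h₁b : G.Adj w₁ b₁) (h₂a : G.Adj w₂ a₂)
    (h₂b : G.Adj w₂ b₂) :
    G.girth ≤ (G.induce X).dist a₁ a₂ + (G.induce X).dist b₁ b₂ + 4 := by
  obtain ⟨P, hP, hPlen, hPC⟩ := C.exists_path_of_dist ha₁ ha₂
  obtain ⟨Q, hQ, hQlen, hQD⟩ := D.exists_path_of_dist hb₁ hb₂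
  let e : G.induce X ↪g G := Embedding.induce X
  let f := e.toHom
  have hf : Function.Injective f := e.injective
  have notMem_support {u v : X} (p : (G.induce X).Walk u v) {w : V} (hw : w ∉ X) :
      w ∉ (p.map f).support := by
    rw [Walk.support_map, List.mem_map]
    rintro ⟨x, -, rfl⟩
    exact hw x.2
  have hPQ : (P.map f).support.Disjoint (Q.map f).support := by
    rw [Walk.support_map, Walk.support_map]
    exact List.disjoint_map hf fun x hxP hxQ => hCD ((C.mem_supp_iff x).1 (hPC x hxP) ▸
      (D.mem_supp_iff x).1 (hQD x hxQ))
  rw [← hPlen, ← hQlen, ← P.length_map f, ← Q.length_map f]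
  exact girth_le_length_add_length_add_four (hP.map hf) (hQ.map hf) hPQ hw
    (notMem_support P hw₁) (notMem_support P hw₂) (notMem_support Q hw₁)
    (notMem_support Q hw₂) h₁a h₂a.symm h₂b h₁b.symm

lemma girth_le_ncard_compVerts_add_ncard_compVerts_add_two [Finite V]
    {C D : (G.induce X).ConnectedComponent} (hCD : C ≠ D) {w₁ w₂ : V} (hw : w₁ ≠ w₂)
    (hw₁ : w₁ ∈ extNbhd G (compVerts G X C) ∩ extNbhd G (compVerts G X D))
    (hw₂ : w₂ ∈ extNbhd G (compVerts G X C) ∩ extNbhd G (compVerts G X D)) :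
    G.girth ≤ (compVerts G X C).ncard + (compVerts G X D).ncard + 2 := by
  obtain ⟨hw₁X, a₁, ha₁, h₁a⟩ := notMem_and_exists_adj_of_mem_extNbhd hw₁.1
  obtain ⟨-, b₁, hb₁, h₁b⟩ := notMem_and_exists_adj_of_mem_extNbhd hw₁.2
  obtain ⟨hw₂X, a₂, ha₂, h₂a⟩ := notMem_and_exists_adj_of_mem_extNbhd hw₂.1
  obtain ⟨-, b₂, hb₂, h₂b⟩ := notMem_and_exists_adj_of_mem_extNbhd hw₂.2
  have := girth_le_dist_add_dist_add_four hCD ha₁ ha₂ hb₁ hb₂ hw hw₁X hw₂X h₁a h₁b h₂a h₂b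
  have := C.dist_lt_ncard_supp ha₁ ha₂
  have := D.dist_lt_ncard_supp hb₁ hb₂
  rw [ncard_compVerts, ncard_compVerts]
  omega

lemma ncard_extNbhd_inter_extNbhd_le_one [Finite V]
    {C D : (G.induce X).ConnectedComponent} (hCD : C ≠ D)
    (hg : (compVerts G X C).ncard + (compVerts G X D).ncard + 2 < G.girth) :
    (extNbhd G (compVerts G X C) ∩ extNbhd G (compVerts G X D)).ncard ≤ 1 := by
  refine (Set.ncard_le_one_iff (Set.toFinite _)).2 fun hw₁ hw₂ => ?_
  by_contra hw
  exact (girth_le_ncard_compVerts_add_ncard_compVerts_add_two hCD hw hw₁ hw₂).not_gt hg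

lemma ncard_extNbhd_inter_extNbhd_le_two [Finite V]
    {C D : (G.induce X).ConnectedComponent} (hCD : C ≠ D)
    (hg : G.girth = (compVerts G X C).ncard + (compVerts G X D).ncard + 2)
    (hg5 : 5 ≤ G.girth) :
    (extNbhd G (compVerts G X C) ∩ extNbhd G (compVerts G X D)).ncard ≤ 2 := by
  set S := extNbhd G (compVerts G X C) ∩ extNbhd G (compVerts G X D)
  have hS : ∀ w ∈ S, ∃ a ∈ C.supp, ∃ b ∈ D.supp, G.Adj w a ∧ G.Adj w b ∧ w ∉ X := by
    intro w hw
    obtain ⟨hwX, a, ha, haw⟩ := notMem_and_exists_adj_of_mem_extNbhd hw.1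
    obtain ⟨-, b, hb, hbw⟩ := notMem_and_exists_adj_of_mem_extNbhd hw.2
    exact ⟨a, ha, b, hb, haw, hbw, hwX⟩
  choose a ha b hb haw hbw hX using hS
  rw [ncard_compVerts, ncard_compVerts] at hg
  have tight : ∀ w (hw : w ∈ S) w' (hw' : w' ∈ S), w ≠ w' →
      (G.induce X).dist (a w hw) (a w' hw') + 1 = C.supp.ncard ∧
        (G.induce X).dist (b w hw) (b w' hw') + 1 = D.supp.ncard := by
    intro w hw w' hw' hne
    have := girth_le_dist_add_dist_add_four hCD (ha w hw) (ha w' hw') (hb w hw) (hb w' hw')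
      hne (hX w hw) (hX w' hw') (haw w hw) (hbw w hw) (haw w' hw') (hbw w' hw')
    have := C.dist_lt_ncard_supp (ha w hw) (ha w' hw')
    have := D.dist_lt_ncard_supp (hb w hw) (hb w' hw')
    omega
  by_contra! h3
  obtain ⟨w₁, h₁, w₂, h₂, w₃, h₃, h₁₂, h₁₃, h₂₃⟩ := (Set.two_lt_ncard (Set.toFinite S)).1 h3
  have hC := C.ncard_supp_le_one_of_dist_add_one_eq (ha w₁ h₁) (ha w₂ h₂) (ha w₃ h₃)
    (tight w₁ h₁ w₂ h₂ h₁₂).1 (tight w₁ h₁ w₃ h₃ h₁₃).1 (tight w₃ h₃ w₂ h₂ h₂₃.symm).1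
  have hD := D.ncard_supp_le_one_of_dist_add_one_eq (hb w₁ h₁) (hb w₂ h₂) (hb w₃ h₃)
    (tight w₁ h₁ w₂ h₂ h₁₂).2 (tight w₁ h₁ w₃ h₃ h₁₃).2 (tight w₃ h₃ w₂ h₂ h₂₃.symm).2
  omega

end InducedComponents

lemma sum_sum_ite_lt_le_choose_two {α : Type*} [Fintype α] [LinearOrder α] {f : α → α → ℕ}
    (hf : ∀ i j, i < j → f i j ≤ 1) :
    ∑ i : α, ∑ j : α, (if i < j then f i j else 0) ≤ (Fintype.card α).choose 2 := by
  rw [← Fintype.card_product_filter_lt, Finset.card_filter, ← Finset.univ_product_univ,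
    Finset.sum_product]
  gcongr with i _ j _
  split_ifs with hij
  exacts [hf i j hij, le_rfl]

/-- If `G` has girth `g ≥ 5`, `|X| = g - 2`, and `K 1, …, K p` are the vertex
sets of the components of `G[X]`, then the sum over unordered pairs `{i,j}` of
`|N_G(K i) ∩ N_G(K j)|` is at most `C(p,2)` for `p ≥ 3` and at most `2p - 2`
for `p ∈ {1, 2}`. -/
theorem stmt_10 [Fintype V] (G : SimpleGraph V) (g : ℕ)
    (hg : G.girth = (g : ℕ∞)) (hg5 : 5 ≤ g)
    (X : Set V) (hX : X.ncard = g - 2)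
    (p : ℕ) (K : Fin p → Set V)
    (hK : ∀ i, ∃ C : (G.induce X).ConnectedComponent, K i = compVerts G X C)
    (hKinj : Function.Injective K)
    (hKsurj : ∀ C : (G.induce X).ConnectedComponent, ∃ i, K i = compVerts G X C) :
    (3 ≤ p →
      (∑ i : Fin p, ∑ j : Fin p,
        if i < j then (extNbhd G (K i) ∩ extNbhd G (K j)).ncard else 0) ≤ p.choose 2) ∧
    (p = 1 ∨ p = 2 →
      (∑ i : Fin p, ∑ j : Fin p,
        if i < j then (extNbhd G (K i) ∩ extNbhd G (K j)).ncard else 0) ≤ 2 * p - 2) := by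
  choose C hC using hK
  obtain rfl : K = fun i => compVerts G X (C i) := funext hC
  have hCinj : Function.Injective C := fun i j h => hKinj (by simp only [h])
  have hgirth : G.girth = g := by exact_mod_cast hg
  refine ⟨fun hp => ?_, ?_⟩
  · refine (sum_sum_ite_lt_le_choose_two fun i j hij => ?_).trans_eq (by rw [Fintype.card_fin])
    obtain ⟨l, hli, hlj⟩ := Fin.exists_ne_and_ne_of_two_lt i j hp
    have := ncard_compVerts_add_ncard_compVerts_lt (hCinj.ne hij.ne) (hCinj.ne hli)
      (hCinj.ne hlj)
    exact ncard_extNbhd_inter_extNbhd_le_one (hCinj.ne hij.ne) (by omega)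
  · rintro (rfl | rfl)
    · simp
    · have hcover : ∀ E, E = C 0 ∨ E = C 1 := by
        intro E
        obtain ⟨i, hi⟩ := hKsurj E
        rw [← compVerts_injective hi]
        fin_cases i <;> simp
      have := ncard_compVerts_add_ncard_compVerts_eq (hCinj.ne zero_ne_one) hcover
      simpa [Fin.sum_univ_two] using
        ncard_extNbhd_inter_extNbhd_le_two (hCinj.ne zero_ne_one) (by omega) (by omega)
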